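/- Let (X, 𝓕, m) be a probability space, T an m-nonsingular transformation whose Perron–Frobenius operator 𝓛_T is asymptotically periodic with data s, r(i), g_{i,j}, λ_{i,j}; set g_i = (1/r(i)) Σ_{j=1}^{r(i)} g_{i,j}. Then for each i ∈ {1,…,s}, the probability measure μ_i defined by dμ_i = g_i dm is T-invariant (T is measure-preserving on (X, μ_i)) and T is ergodic with respect to μ_i. -/

import Mathlib

open MeasureTheory Filter Topology

noncomputable section

/-- `L` is the Perron–Frobenius operator of the `μ`-nonsingular transformation `T`:
for every integrable `f`, `L f` is integrable and `∫_A L f dμ = ∫_{T⁻¹ A} f dμ`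
for every measurable set `A`. -/
def IsPF {α : Type*} [MeasurableSpace α] (μ : Measure α) (T : α → α)
    (L : (α → ℝ) → α → ℝ) : Prop :=
  ∀ f : α → ℝ, Integrable f μ →
    Integrable (L f) μ ∧
      ∀ A : Set α, MeasurableSet A → ∫ x in A, L f x ∂μ = ∫ x in T ⁻¹' A, f x ∂μ

/-- Asymptotic periodicity of an operator `L` on `L¹(μ)` with data `s`, `r i`,
probability densities `g i j` and bounded linear functionals `Λ i j`. -/
def AsympPeriodic {α : Type*} [MeasurableSpace α] (μ : Measure α)
    (L : (α → ℝ) → α → ℝ) (s : ℕ) (r : ℕ → ℕ) (g : ℕ → ℕ → α → ℝ)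
    (Λ : ℕ → ℕ → (α →₁[μ] ℝ) →L[ℝ] ℝ) : Prop :=
  1 ≤ s ∧ (∀ i ∈ Finset.Icc 1 s, 1 ≤ r i) ∧
    (∀ i ∈ Finset.Icc 1 s, ∀ j ∈ Finset.Icc 1 (r i),
      Measurable (g i j) ∧ Integrable (g i j) μ ∧ 0 ≤ᵐ[μ] g i j ∧ ∫ x, g i j x ∂μ = 1) ∧
    (∀ i ∈ Finset.Icc 1 s, ∀ j ∈ Finset.Icc 1 (r i), ∀ k ∈ Finset.Icc 1 s,
      ∀ l ∈ Finset.Icc 1 (r k), (i, j) ≠ (k, l) →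
        (fun x => g i j x * g k l x) =ᵐ[μ] 0) ∧
    (∀ i ∈ Finset.Icc 1 s,
      (∀ j ∈ Finset.Icc 1 (r i - 1), L (g i j) =ᵐ[μ] g i (j + 1)) ∧
        L (g i (r i)) =ᵐ[μ] g i 1) ∧
    ∀ (f : α → ℝ) (hf : Integrable f μ),
      Tendsto (fun n => ∫ x, |(L^[n] (fun x => f x -
          ∑ i ∈ Finset.Icc 1 s, ∑ j ∈ Finset.Icc 1 (r i), Λ i j (hf.toL1 f) * g i j x)) x| ∂μ)
        atTop (𝓝 0)

/-- The averaged density `(1/r) ∑_{j=1}^{r} g j`. -/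
def avgDens {α : Type*} (r : ℕ) (g : ℕ → α → ℝ) : α → ℝ :=
  fun x => (r : ℝ)⁻¹ * ∑ j ∈ Finset.Icc 1 r, g j x

/-!
The density `g_i` is fixed by `𝓛_T`, which permutes `g_{i,1}, …, g_{i,r(i)}` cyclically; hence
`μ_i` is `T`-invariant. For ergodicity let `T⁻¹A = A`; then `f = 1_A g_i` is again fixed by `𝓛_T`.
With `N = ∏ r(k)`, `𝓛_T^N` fixes every `g_{k,l}`, hence also `D = f - ∑ λ_{k,l}(f) g_{k,l}`, and
since `‖𝓛_T^n D‖₁ → 0` this forces `D = 0`. The `g_{k,l}` have disjoint supports, so the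
coefficients of `f` are determined by `f`: they vanish off the `i`-th cycle, and `𝓛_T f = f` makes
them constant along it. Thus `1_A g_i = κ g_i`, so `κ ∈ {0, 1}`, i.e. `μ_i(A) = 0` or
`μ_i(Aᶜ) = 0`.
-/

open Finset

namespace IsPF

variable {X : Type*} [MeasurableSpace X] {μ : Measure X} {T : X → X} {L : (X → ℝ) → X → ℝ}
  {u v : X → ℝ}

theorem integrable (hL : IsPF μ T L) (hu : Integrable u μ) : Integrable (L u) μ :=
  (hL u hu).1

theorem setIntegral_eq (hL : IsPF μ T L) (hu : Integrable u μ) {A : Set X}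
    (hA : MeasurableSet A) : ∫ x in A, L u x ∂μ = ∫ x in T ⁻¹' A, u x ∂μ :=
  (hL u hu).2 A hA

theorem ae_eq_of_setIntegral_eq (hL : IsPF μ T L) (hu : Integrable u μ) (hv : Integrable v μ)
    (h : ∀ A, MeasurableSet A → ∫ x in T ⁻¹' A, u x ∂μ = ∫ x in A, v x ∂μ) : L u =ᵐ[μ] v :=
  (hL.integrable hu).ae_eq_of_forall_setIntegral_eq _ _ hv fun A hA _ =>
    (hL.setIntegral_eq hu hA).trans (h A hA)

theorem congr_ae (hL : IsPF μ T L) (hu : Integrable u μ) (hv : Integrable v μ)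
    (h : u =ᵐ[μ] v) : L u =ᵐ[μ] L v :=
  hL.ae_eq_of_setIntegral_eq hu (hL.integrable hv) fun A hA => by
    rw [hL.setIntegral_eq hv hA]
    exact integral_congr_ae (ae_restrict_of_ae h)

theorem sub_ae (hL : IsPF μ T L) (hu : Integrable u μ) (hv : Integrable v μ) :
    L (fun x => u x - v x) =ᵐ[μ] fun x => L u x - L v x :=
  hL.ae_eq_of_setIntegral_eq (hu.sub hv) ((hL.integrable hu).sub (hL.integrable hv))
    fun A hA => by
      rw [integral_sub hu.integrableOn hv.integrableOn,
        integral_sub (hL.integrable hu).integrableOn (hL.integrable hv).integrableOn,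
        hL.setIntegral_eq hu hA, hL.setIntegral_eq hv hA]

theorem sum_mul_ae {ι : Type*} (hL : IsPF μ T L) (P : Finset ι) (c : ι → ℝ)
    {G : ι → X → ℝ} (hG : ∀ p ∈ P, Integrable (G p) μ) :
    L (fun x => ∑ p ∈ P, c p * G p x) =ᵐ[μ] fun x => ∑ p ∈ P, c p * L (G p) x :=
  hL.ae_eq_of_setIntegral_eq (integrable_finsetSum P fun p hp => (hG p hp).const_mul _)
    (integrable_finsetSum P fun p hp => ((hL.integrable (hG p hp)).const_mul _)) fun A hA => by
      rw [integral_finsetSum P fun p hp => ((hG p hp).const_mul _).integrableOn,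
        integral_finsetSum P fun p hp => ((hL.integrable (hG p hp)).const_mul _).integrableOn]
      refine Finset.sum_congr rfl fun p hp => ?_
      rw [integral_const_mul, integral_const_mul, hL.setIntegral_eq (hG p hp) hA]

theorem iterate (hT : Measurable T) (hL : IsPF μ T L) : ∀ n, IsPF μ T^[n] L^[n]
  | 0 => fun _ hf => ⟨hf, fun _ _ => rfl⟩
  | n + 1 => fun f hf => by
    have hn := iterate hT hL n f hf
    refine ⟨by rw [Function.iterate_succ_apply']; exact hL.integrable hn.1, fun A hA => ?_⟩
    rw [Function.iterate_succ_apply', hL.setIntegral_eq hn.1 hA, hn.2 _ (hT hA),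
      ← Set.preimage_comp, ← Function.iterate_succ']

theorem iterate_ae_eq_self (hL : IsPF μ T L) (hu : Integrable u μ) (h : L u =ᵐ[μ] u) :
    ∀ n, L^[n] u =ᵐ[μ] u
  | 0 => .rfl
  | n + 1 => by
    have ih := iterate_ae_eq_self hL hu h n
    rw [Function.iterate_succ_apply']
    exact (hL.congr_ae (hu.congr ih.symm) hu ih).trans h

theorem iterate_ae_eq_iterate_of_ae_eq {ι : Type*} (hL : IsPF μ T L) {G : ι → X → ℝ}
    {σ : ι → ι} {S : Set ι} (hσ : Set.MapsTo σ S S) (hG : ∀ j ∈ S, Integrable (G j) μ)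
    (hGσ : ∀ j ∈ S, L (G j) =ᵐ[μ] G (σ j)) (n : ℕ) {j : ι} (hj : j ∈ S) :
    L^[n] (G j) =ᵐ[μ] G (σ^[n] j) := by
  induction n with
  | zero => rfl
  | succ n ih =>
    rw [Function.iterate_succ_apply', Function.iterate_succ_apply']
    have hjn : σ^[n] j ∈ S := hσ.iterate n hj
    exact (hL.congr_ae ((hG _ hjn).congr ih.symm) (hG _ hjn) ih).trans (hGσ _ hjn)

theorem setIntegral_preimage_of_fixed (hL : IsPF μ T L) (hu : Integrable u μ)
    (h : L u =ᵐ[μ] u) {A : Set X} (hA : MeasurableSet A) :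
    ∫ x in T ⁻¹' A, u x ∂μ = ∫ x in A, u x ∂μ :=
  (hL.setIntegral_eq hu hA).symm.trans (integral_congr_ae (ae_restrict_of_ae h))

theorem indicator_fixed (hL : IsPF μ T L) (hu : Integrable u μ) (h : L u =ᵐ[μ] u)
    {A : Set X} (hA : MeasurableSet A) (hTA : T ⁻¹' A = A) :
    L (A.indicator u) =ᵐ[μ] A.indicator u :=
  hL.ae_eq_of_setIntegral_eq (hu.indicator hA) (hu.indicator hA) fun B hB => by
    have hBA : T ⁻¹' B ∩ A = T ⁻¹' (B ∩ A) := by rw [Set.preimage_inter, hTA]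
    rw [setIntegral_indicator hA, setIntegral_indicator hA, hBA,
      hL.setIntegral_preimage_of_fixed hu h (hB.inter hA)]

theorem measurePreserving_withDensity (hT : Measurable T) (hL : IsPF μ T L)
    (hu : Integrable u μ) (hu0 : 0 ≤ᵐ[μ] u) (h : L u =ᵐ[μ] u) :
    MeasurePreserving T (μ.withDensity fun x => ENNReal.ofReal (u x))
      (μ.withDensity fun x => ENNReal.ofReal (u x)) := by
  refine ⟨hT, Measure.ext fun A hA => ?_⟩
  rw [Measure.map_apply hT hA, withDensity_apply _ (hT hA), withDensity_apply _ hA,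
    ← ofReal_integral_eq_lintegral_ofReal hu.integrableOn (ae_restrict_of_ae hu0),
    ← ofReal_integral_eq_lintegral_ofReal hu.integrableOn (ae_restrict_of_ae hu0),
    hL.setIntegral_preimage_of_fixed hu h hA]

theorem ae_eq_zero_of_iterate_ae_eq_self (hT : Measurable T) (hL : IsPF μ T L) {D : X → ℝ}
    (hD : Integrable D μ) {N : ℕ} (hN : 0 < N) (hper : L^[N] D =ᵐ[μ] D)
    (hlim : Tendsto (fun n => ∫ x, |L^[n] D x| ∂μ) atTop (𝓝 0)) : D =ᵐ[μ] 0 := by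
  have hconst : ∀ t, ∫ x, |L^[N * t] D x| ∂μ = ∫ x, |D x| ∂μ := fun t => by
    rw [Function.iterate_mul]
    exact integral_congr_ae (((hL.iterate hT N).iterate_ae_eq_self hD hper t).fun_comp abs)
  have hsub : Tendsto (fun t : ℕ => N * t) atTop atTop := tendsto_id.const_mul_atTop' hN
  have hzero : ∫ x, |D x| ∂μ = 0 := by
    have := hlim.comp hsub
    simp only [Function.comp_def, hconst] at this
    exact tendsto_const_nhds_iff.1 this
  filter_upwards [(integral_eq_zero_iff_of_nonneg (fun x => abs_nonneg (D x)) hD.abs).1 hzero]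
    with x hx
  exact abs_eq_zero.1 hx

end IsPF

section DisjointFamily

variable {X : Type*} [MeasurableSpace X] {μ : Measure X} {ι : Type*} {P : Finset ι}
  {G : ι → X → ℝ}

theorem ae_sum_mul_eq_of_ne_zero
    (hG : ∀ p ∈ P, ∀ q ∈ P, p ≠ q → (fun x => G p x * G q x) =ᵐ[μ] 0) (a : ι → ℝ) {q : ι}
    (hq : q ∈ P) : ∀ᵐ x ∂μ, G q x ≠ 0 → ∑ p ∈ P, a p * G p x = a q * G q x := by
  have hvanish : ∀ᵐ x ∂μ, ∀ p ∈ P, p ≠ q → G p x * G q x = 0 := by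
    refine (eventually_all_finset P).2 fun p hp => ?_
    by_cases hpq : p = q
    · exact .of_forall fun _ h => absurd hpq h
    · filter_upwards [hG p hp q hq hpq] with x hx _ using hx
  filter_upwards [hvanish] with x hx hqx
  refine Finset.sum_eq_single_of_mem q hq fun p hp hpq => ?_
  rw [(mul_eq_zero.1 (hx p hp hpq)).resolve_right hqx, mul_zero]

theorem eq_of_ae_mul_eq {u : X → ℝ} (hu : ¬u =ᵐ[μ] 0) {a b : ℝ}
    (h : ∀ᵐ x ∂μ, u x ≠ 0 → a * u x = b * u x) : a = b := by
  by_contra hab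
  exact hu (h.mono fun x hx => of_not_not fun hux => hab (mul_right_cancel₀ hux (hx hux)))

theorem coeff_eq_of_sum_ae_eq_sum_comp
    (hG : ∀ p ∈ P, ∀ q ∈ P, p ≠ q → (fun x => G p x * G q x) =ᵐ[μ] 0)
    (hG0 : ∀ p ∈ P, ¬G p =ᵐ[μ] 0) {σ : ι → ι} (hσ : Set.MapsTo σ P P) (hσinj : Set.InjOn σ P)
    {a : ι → ℝ}
    (h : (fun x => ∑ p ∈ P, a p * G p x) =ᵐ[μ] fun x => ∑ p ∈ P, a p * G (σ p) x)
    {q : ι} (hq : q ∈ P) : a (σ q) = a q := by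
  have hGσ : ∀ p ∈ P, ∀ p' ∈ P, p ≠ p' → (fun x => G (σ p) x * G (σ p') x) =ᵐ[μ] 0 :=
    fun p hp p' hp' hne => hG _ (hσ hp) _ (hσ hp') (hσinj.ne hp hp' hne)
  refine eq_of_ae_mul_eq (hG0 _ (hσ hq)) ?_
  filter_upwards [h, ae_sum_mul_eq_of_ne_zero hG a (hσ hq),
    ae_sum_mul_eq_of_ne_zero (G := fun p => G (σ p)) hGσ a hq] with x hx h₁ h₂ hne
  rw [← h₁ hne, hx, h₂ hne]

end DisjointFamily

def cycSucc (R l : ℕ) : ℕ := l % R + 1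

section CycSucc

variable {R l : ℕ}

theorem cycSucc_of_lt (h : l < R) : cycSucc R l = l + 1 := by
  rw [cycSucc, Nat.mod_eq_of_lt h]

theorem cycSucc_mem_Icc (hl : l ∈ Icc 1 R) : cycSucc R l ∈ Icc 1 R := by
  rw [mem_Icc] at hl ⊢
  have := Nat.mod_lt l (show 0 < R by omega)
  unfold cycSucc
  omega

theorem mapsTo_cycSucc : Set.MapsTo (cycSucc R) (Icc 1 R) (Icc 1 R) :=
  fun _ hl => cycSucc_mem_Icc hl

theorem injOn_cycSucc : Set.InjOn (cycSucc R) (Icc 1 R) := by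
  intro l hl l' hl' h
  simp only [coe_Icc, Set.mem_Icc] at hl hl'
  unfold cycSucc at h
  rcases hl.2.eq_or_lt with rfl | hlt <;> rcases hl'.2.eq_or_lt with rfl | hlt' <;>
    simp_all [Nat.mod_eq_of_lt]

theorem sum_cycSucc {M : Type*} [AddCommMonoid M] (F : ℕ → M) :
    ∑ l ∈ Icc 1 R, F (cycSucc R l) = ∑ l ∈ Icc 1 R, F l :=
  Finset.sum_nbij (cycSucc R) (fun _ => cycSucc_mem_Icc) injOn_cycSucc
    (((Icc 1 R).finite_toSet.injOn_iff_bijOn_of_mapsTo mapsTo_cycSucc).1 injOn_cycSucc).surjOn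
    fun _ _ => rfl

theorem iterate_cycSucc (hl : l ∈ Icc 1 R) (n : ℕ) :
    (cycSucc R)^[n] l = (l - 1 + n) % R + 1 := by
  rw [mem_Icc] at hl
  induction n with
  | zero => rw [Function.iterate_zero_apply, Nat.add_zero, Nat.mod_eq_of_lt (by omega)]; omega
  | succ n ih => rw [Function.iterate_succ_apply', ih, cycSucc, Nat.mod_add_mod, Nat.add_assoc]

theorem iterate_cycSucc_of_dvd (hl : l ∈ Icc 1 R) {N : ℕ} (hN : R ∣ N) :
    (cycSucc R)^[N] l = l := by
  obtain ⟨q, rfl⟩ := hN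
  rw [iterate_cycSucc hl, Nat.add_mul_mod_self_left, Nat.mod_eq_of_lt] <;>
    rw [mem_Icc] at hl <;> omega

theorem eq_of_forall_cycSucc_eq {a : ℕ → ℝ} (h : ∀ l ∈ Icc 1 R, a (cycSucc R l) = a l) :
    ∀ l ∈ Icc 1 R, a l = a 1 := by
  intro l hl
  rw [mem_Icc] at hl
  induction l with
  | zero => omega
  | succ l ih =>
    rcases Nat.eq_zero_or_pos l with rfl | hl0
    · rfl
    · have hlR : l < R := by omega
      rw [← cycSucc_of_lt hlR, h l (mem_Icc.2 ⟨hl0, hlR.le⟩), ih ⟨hl0, hlR.le⟩]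

end CycSucc

def pieces (s : ℕ) (r : ℕ → ℕ) : Finset (ℕ × ℕ) :=
  (Icc 1 s).biUnion fun k => {k} ×ˢ Icc 1 (r k)

theorem mem_pieces {s : ℕ} {r : ℕ → ℕ} {p : ℕ × ℕ} :
    p ∈ pieces s r ↔ p.1 ∈ Icc 1 s ∧ p.2 ∈ Icc 1 (r p.1) := by
  obtain ⟨k, l⟩ := p
  simp [pieces]

theorem sum_pieces {M : Type*} [AddCommMonoid M] (s : ℕ) (r : ℕ → ℕ) (F : ℕ → ℕ → M) :
    ∑ p ∈ pieces s r, F p.1 p.2 = ∑ k ∈ Icc 1 s, ∑ l ∈ Icc 1 (r k), F k l :=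
  Finset.sum_finset_product' _ _ _ fun _ => mem_pieces

def pieceSucc (r : ℕ → ℕ) (p : ℕ × ℕ) : ℕ × ℕ := (p.1, cycSucc (r p.1) p.2)

theorem mapsTo_pieceSucc {s : ℕ} {r : ℕ → ℕ} :
    Set.MapsTo (pieceSucc r) (pieces s r) (pieces s r) := fun _ hp =>
  mem_pieces.2 ⟨(mem_pieces.1 hp).1, cycSucc_mem_Icc (mem_pieces.1 hp).2⟩

theorem injOn_pieceSucc {s : ℕ} {r : ℕ → ℕ} : Set.InjOn (pieceSucc r) (pieces s r) := by
  rintro ⟨k, l⟩ hp ⟨k', l'⟩ hq h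
  simp only [pieceSucc, Prod.mk.injEq] at h
  obtain ⟨rfl, h⟩ := h
  exact congrArg _ (injOn_cycSucc (mem_pieces.1 hp).2 (mem_pieces.1 hq).2 h)

theorem not_ae_eq_zero_of_integral_eq_one {X : Type*} [MeasurableSpace X] {μ : Measure X}
    {u : X → ℝ} (h : ∫ x, u x ∂μ = 1) : ¬u =ᵐ[μ] 0 := fun h0 => by
  simp [integral_congr_ae h0] at h

theorem isProbabilityMeasure_withDensity_ofReal {X : Type*} [MeasurableSpace X] {μ : Measure X}
    {u : X → ℝ} (hu : Integrable u μ) (hu0 : 0 ≤ᵐ[μ] u) (h : ∫ x, u x ∂μ = 1) :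
    IsProbabilityMeasure (μ.withDensity fun x => ENNReal.ofReal (u x)) := by
  constructor
  rw [withDensity_apply _ MeasurableSet.univ, Measure.restrict_univ,
    ← ofReal_integral_eq_lintegral_ofReal hu hu0, h, ENNReal.ofReal_one]

theorem eventuallyConst_ae_withDensity_of_indicator_ae_eq {X : Type*} [MeasurableSpace X]
    {μ : Measure X} {u : X → ℝ} (hu : AEMeasurable u μ) (hu0 : ¬u =ᵐ[μ] 0) {A : Set X} {κ : ℝ}
    (h : A.indicator u =ᵐ[μ] fun x => κ * u x) :
    EventuallyConst A (ae (μ.withDensity fun x => ENNReal.ofReal (u x))) := by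
  have hκ : κ = 0 ∨ κ = 1 := by
    by_contra! hκ
    refine hu0 (h.mono fun x (hx : A.indicator u x = κ * u x) => ?_)
    by_cases hxA : x ∈ A
    · rw [Set.indicator_of_mem hxA] at hx
      have : (1 - κ) * u x = 0 := by linarith
      exact (mul_eq_zero.1 this).resolve_left (sub_ne_zero.2 hκ.2.symm)
    · rw [Set.indicator_of_notMem hxA] at hx
      exact (mul_eq_zero.1 hx.symm).resolve_left hκ.1
  rw [eventuallyConst_set, ae_withDensity_iff' hu.ennreal_ofReal,
    ae_withDensity_iff' hu.ennreal_ofReal]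
  rcases hκ with rfl | rfl
  · refine .inr (h.mono fun x (hx : A.indicator u x = 0 * u x) hne hxA => hne ?_)
    rw [Set.indicator_of_mem hxA, zero_mul] at hx
    rw [hx, ENNReal.ofReal_zero]
  · refine .inl (h.mono fun x (hx : A.indicator u x = 1 * u x) hne =>
      of_not_not fun hxA => hne ?_)
    rw [Set.indicator_of_notMem hxA, one_mul] at hx
    rw [← hx, ENNReal.ofReal_zero]

theorem sum_pieces_mul_eq_mul_avgDens {X : Type*} {s : ℕ} {r : ℕ → ℕ} {g : ℕ → ℕ → X → ℝ}
    {c : ℕ × ℕ → ℝ} {i : ℕ} (hi : i ∈ Icc 1 s) (hr : r i ≠ 0)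
    (hzero : ∀ p ∈ pieces s r, p.1 ≠ i → c p = 0)
    (hconst : ∀ l ∈ Icc 1 (r i), c (i, l) = c (i, 1)) (x : X) :
    ∑ p ∈ pieces s r, c p * g p.1 p.2 x = c (i, 1) * r i * avgDens (r i) (g i) x := by
  rw [sum_pieces s r fun k l => c (k, l) * g k l x, Finset.sum_eq_single_of_mem i hi
      fun k hk hki => Finset.sum_eq_zero fun l hl => by
        rw [hzero (k, l) (mem_pieces.2 ⟨hk, hl⟩) hki, zero_mul],
    Finset.sum_congr rfl fun l hl => by rw [hconst l hl], ← Finset.mul_sum, avgDens]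
  field_simp

namespace AsympPeriodic

variable {X : Type*} [MeasurableSpace X] {m : Measure X} {T : X → X} {L : (X → ℝ) → X → ℝ}
  {s : ℕ} {r : ℕ → ℕ} {g : ℕ → ℕ → X → ℝ} {Λ : ℕ → ℕ → (X →₁[m] ℝ) →L[ℝ] ℝ}

theorem r_pos (hap : AsympPeriodic m L s r g Λ) {k : ℕ} (hk : k ∈ Icc 1 s) : 0 < r k :=
  hap.2.1 k hk

theorem density (hap : AsympPeriodic m L s r g Λ) {k l : ℕ} (hk : k ∈ Icc 1 s)
    (hl : l ∈ Icc 1 (r k)) : Integrable (g k l) m ∧ 0 ≤ᵐ[m] g k l ∧ ∫ x, g k l x ∂m = 1 :=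
  (hap.2.2.1 k hk l hl).2

theorem integrable (hap : AsympPeriodic m L s r g Λ) {p : ℕ × ℕ} (hp : p ∈ pieces s r) :
    Integrable (g p.1 p.2) m :=
  (hap.density (mem_pieces.1 hp).1 (mem_pieces.1 hp).2).1

theorem not_ae_eq_zero (hap : AsympPeriodic m L s r g Λ) {p : ℕ × ℕ} (hp : p ∈ pieces s r) :
    ¬g p.1 p.2 =ᵐ[m] 0 :=
  not_ae_eq_zero_of_integral_eq_one (hap.density (mem_pieces.1 hp).1 (mem_pieces.1 hp).2).2.2

theorem mul_ae_eq_zero (hap : AsympPeriodic m L s r g Λ) :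
    ∀ p ∈ pieces s r, ∀ q ∈ pieces s r, p ≠ q →
      (fun x => g p.1 p.2 x * g q.1 q.2 x) =ᵐ[m] 0 :=
  fun _ hp _ hq hpq => hap.2.2.2.1 _ (mem_pieces.1 hp).1 _ (mem_pieces.1 hp).2 _
    (mem_pieces.1 hq).1 _ (mem_pieces.1 hq).2 hpq

theorem apply_ae_eq (hap : AsympPeriodic m L s r g Λ) {k l : ℕ} (hk : k ∈ Icc 1 s)
    (hl : l ∈ Icc 1 (r k)) : L (g k l) =ᵐ[m] g k (cycSucc (r k) l) := by
  obtain ⟨hshift, hlast⟩ := hap.2.2.2.2.1 k hk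
  rw [mem_Icc] at hl
  rcases hl.2.eq_or_lt with rfl | hlt
  · rwa [cycSucc, Nat.mod_self]
  · rw [cycSucc_of_lt hlt]
    exact hshift l (mem_Icc.2 ⟨hl.1, by omega⟩)

theorem iterate_ae_eq_self (hap : AsympPeriodic m L s r g Λ) (hL : IsPF m T L) {p : ℕ × ℕ}
    (hp : p ∈ pieces s r) {N : ℕ} (hN : r p.1 ∣ N) : L^[N] (g p.1 p.2) =ᵐ[m] g p.1 p.2 := by
  obtain ⟨hk, hl⟩ := mem_pieces.1 hp
  have := hL.iterate_ae_eq_iterate_of_ae_eq (G := g p.1) mapsTo_cycSucc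
    (fun l hl' => hap.integrable (p := (p.1, l)) (mem_pieces.2 ⟨hk, hl'⟩))
    (fun l hl' => hap.apply_ae_eq hk hl') N hl
  rwa [iterate_cycSucc_of_dvd hl hN] at this

theorem ae_eq_sum_of_fixed (hT : Measurable T) (hL : IsPF m T L)
    (hap : AsympPeriodic m L s r g Λ) {f : X → ℝ} (hf : Integrable f m) (hfix : L f =ᵐ[m] f) :
    f =ᵐ[m] fun x => ∑ p ∈ pieces s r, Λ p.1 p.2 (hf.toL1 f) * g p.1 p.2 x := by
  set H : X → ℝ := fun x => ∑ p ∈ pieces s r, Λ p.1 p.2 (hf.toL1 f) * g p.1 p.2 x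
  set N := ∏ k ∈ Icc 1 s, r k
  have hN : 0 < N := Finset.prod_pos fun k hk => hap.r_pos hk
  have hH : Integrable H m := integrable_finsetSum _ fun p hp => (hap.integrable hp).const_mul _
  have hLN := hL.iterate hT N
  have hHN : L^[N] H =ᵐ[m] H := by
    refine (hLN.sum_mul_ae _ _ fun p hp => hap.integrable hp).trans ?_
    have hpiece : ∀ᵐ x ∂m, ∀ p ∈ pieces s r, L^[N] (g p.1 p.2) x = g p.1 p.2 x :=
      (eventually_all_finset _).2 fun p hp => hap.iterate_ae_eq_self hL hp
        (dvd_prod_of_mem r (mem_pieces.1 hp).1)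
    filter_upwards [hpiece] with x hx
    exact Finset.sum_congr rfl fun p hp => by rw [hx p hp]
  have hD : L^[N] (fun x => f x - H x) =ᵐ[m] fun x => f x - H x :=
    (hLN.sub_ae hf hH).trans ((hL.iterate_ae_eq_self hf hfix N).sub hHN)
  have hlim := hap.2.2.2.2.2 f hf
  have hDH : (fun x => f x - H x) = fun x => f x -
      ∑ k ∈ Icc 1 s, ∑ l ∈ Icc 1 (r k), Λ k l (hf.toL1 f) * g k l x :=
    funext fun x => by rw [← sum_pieces s r (fun k l => Λ k l (hf.toL1 f) * g k l x)]
  rw [← hDH] at hlim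
  filter_upwards [hL.ae_eq_zero_of_iterate_ae_eq_self hT (hf.sub hH) hN hD hlim] with x hx
  exact sub_eq_zero.1 hx

theorem coeff_pieceSucc_eq (hL : IsPF m T L) (hap : AsympPeriodic m L s r g Λ) {f : X → ℝ}
    (hf : Integrable f m) (hfix : L f =ᵐ[m] f) {c : ℕ × ℕ → ℝ}
    (hrep : f =ᵐ[m] fun x => ∑ p ∈ pieces s r, c p * g p.1 p.2 x) {q : ℕ × ℕ}
    (hq : q ∈ pieces s r) : c (pieceSucc r q) = c q := by
  have hLrep : (fun x => ∑ p ∈ pieces s r, c p * g p.1 p.2 x) =ᵐ[m]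
      fun x => ∑ p ∈ pieces s r, c p * g (pieceSucc r p).1 (pieceSucc r p).2 x := by
    refine hrep.symm.trans (hfix.symm.trans ((hL.congr_ae hf (integrable_finsetSum _ fun p hp =>
      (hap.integrable hp).const_mul _) hrep).trans ?_))
    refine (hL.sum_mul_ae _ _ fun p hp => hap.integrable hp).trans ?_
    filter_upwards [(eventually_all_finset _).2 fun p hp =>
      hap.apply_ae_eq (mem_pieces.1 hp).1 (mem_pieces.1 hp).2] with x hx
    exact Finset.sum_congr rfl fun p hp => by rw [hx p hp]; rfl
  exact coeff_eq_of_sum_ae_eq_sum_comp (G := fun p => g p.1 p.2) hap.mul_ae_eq_zero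
    (fun p hp => hap.not_ae_eq_zero hp) mapsTo_pieceSucc injOn_pieceSucc hLrep hq

variable {i : ℕ}

theorem integrable_avgDens (hap : AsympPeriodic m L s r g Λ) (hi : i ∈ Icc 1 s) :
    Integrable (avgDens (r i) (g i)) m :=
  (integrable_finsetSum _ fun _ hj => (hap.density hi hj).1).const_mul _

theorem avgDens_nonneg (hap : AsympPeriodic m L s r g Λ) (hi : i ∈ Icc 1 s) :
    0 ≤ᵐ[m] avgDens (r i) (g i) := by
  filter_upwards [(eventually_all_finset _).2 fun j hj => (hap.density hi hj).2.1] with x hx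
  exact mul_nonneg (by positivity) (Finset.sum_nonneg hx)

theorem integral_avgDens (hap : AsympPeriodic m L s r g Λ) (hi : i ∈ Icc 1 s) :
    ∫ x, avgDens (r i) (g i) x ∂m = 1 := by
  have hr : (r i : ℝ) ≠ 0 := Nat.cast_ne_zero.2 (hap.r_pos hi).ne'
  unfold avgDens
  rw [integral_const_mul, integral_finsetSum _ fun _ hj => (hap.density hi hj).1,
    Finset.sum_congr rfl fun _ hj => (hap.density hi hj).2.2, sum_const, Nat.card_Icc,
    Nat.add_sub_cancel, nsmul_one, inv_mul_cancel₀ hr]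

theorem avgDens_fixed (hap : AsympPeriodic m L s r g Λ) (hL : IsPF m T L) (hi : i ∈ Icc 1 s) :
    L (avgDens (r i) (g i)) =ᵐ[m] avgDens (r i) (g i) := by
  have hsum : avgDens (r i) (g i) = fun x => ∑ j ∈ Icc 1 (r i), (r i : ℝ)⁻¹ * g i j x :=
    funext fun x => Finset.mul_sum _ _ _
  rw [hsum]
  refine (hL.sum_mul_ae _ _ fun _ hj => (hap.density hi hj).1).trans ?_
  filter_upwards [(eventually_all_finset _).2 fun j hj => hap.apply_ae_eq hi hj] with x hx
  rw [Finset.sum_congr rfl fun j hj => by rw [hx j hj],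
    sum_cycSucc fun j => (r i : ℝ)⁻¹ * g i j x]

theorem avgDens_eq_zero_of_ne_zero (hap : AsympPeriodic m L s r g Λ) (hi : i ∈ Icc 1 s)
    {p : ℕ × ℕ} (hp : p ∈ pieces s r) (hpi : p.1 ≠ i) :
    ∀ᵐ x ∂m, g p.1 p.2 x ≠ 0 → avgDens (r i) (g i) x = 0 := by
  have hvanish : ∀ᵐ x ∂m, ∀ j ∈ Icc 1 (r i), g i j x * g p.1 p.2 x = 0 :=
    (eventually_all_finset _).2 fun j hj => hap.mul_ae_eq_zero (i, j) (mem_pieces.2 ⟨hi, hj⟩)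
      p hp fun h => hpi (congrArg Prod.fst h).symm
  filter_upwards [hvanish] with x hx hne
  rw [avgDens, Finset.sum_eq_zero fun j hj => (mul_eq_zero.1 (hx j hj)).resolve_right hne,
    mul_zero]

theorem exists_ae_eq_const_mul_avgDens (hT : Measurable T) (hL : IsPF m T L)
    (hap : AsympPeriodic m L s r g Λ) (hi : i ∈ Icc 1 s) {f : X → ℝ} (hf : Integrable f m)
    (hfix : L f =ᵐ[m] f) (hsupp : ∀ᵐ x ∂m, avgDens (r i) (g i) x = 0 → f x = 0) :
    ∃ κ : ℝ, f =ᵐ[m] fun x => κ * avgDens (r i) (g i) x := by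
  obtain ⟨c, hrep⟩ : ∃ c : ℕ × ℕ → ℝ, f =ᵐ[m] fun x => ∑ p ∈ pieces s r, c p * g p.1 p.2 x :=
    ⟨_, hap.ae_eq_sum_of_fixed hT hL hf hfix⟩
  have hzero : ∀ p ∈ pieces s r, p.1 ≠ i → c p = 0 := fun p hp hpi => by
    refine eq_of_ae_mul_eq (hap.not_ae_eq_zero hp) ?_
    filter_upwards [hrep, hsupp, ae_sum_mul_eq_of_ne_zero hap.mul_ae_eq_zero c hp,
      hap.avgDens_eq_zero_of_ne_zero hi hp hpi] with x hx hsx hcx hgx hne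
    rw [← hcx hne, ← hx, hsx (hgx hne), zero_mul]
  have hconst : ∀ l ∈ Icc 1 (r i), c (i, l) = c (i, 1) :=
    eq_of_forall_cycSucc_eq (a := fun l => c (i, l)) fun l hl =>
      hap.coeff_pieceSucc_eq hL hf hfix hrep (q := (i, l)) (mem_pieces.2 ⟨hi, hl⟩)
  exact ⟨c (i, 1) * r i, hrep.trans (.of_forall
    (sum_pieces_mul_eq_mul_avgDens hi (hap.r_pos hi).ne' hzero hconst))⟩

end AsympPeriodic

theorem stmt_8_general {X : Type*} [MeasurableSpace X] (m : Measure X)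
    (T : X → X) (hT : Measurable T)
    (L : (X → ℝ) → X → ℝ) (hL : IsPF m T L)
    (s : ℕ) (r : ℕ → ℕ) (g : ℕ → ℕ → X → ℝ) (Λ : ℕ → ℕ → (X →₁[m] ℝ) →L[ℝ] ℝ)
    (hap : AsympPeriodic m L s r g Λ) :
    ∀ i ∈ Finset.Icc 1 s,
      IsProbabilityMeasure
          (m.withDensity fun x => ENNReal.ofReal (avgDens (r i) (g i) x)) ∧
        Ergodic T (m.withDensity fun x => ENNReal.ofReal (avgDens (r i) (g i) x)) := by
  intro i hi
  have hu := hap.integrable_avgDens hi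
  have hu0 := hap.avgDens_nonneg hi
  have hfix := hap.avgDens_fixed hL hi
  refine ⟨isProbabilityMeasure_withDensity_ofReal hu hu0 (hap.integral_avgDens hi),
    hL.measurePreserving_withDensity hT hu hu0 hfix, ⟨fun A hA hTA => ?_⟩⟩
  obtain ⟨κ, hκ⟩ := hap.exists_ae_eq_const_mul_avgDens hT hL hi (hu.indicator hA)
    (hL.indicator_fixed hu hfix hA hTA) (.of_forall fun x hx => by simp [hx])
  exact eventuallyConst_ae_withDensity_of_indicator_ae_eq hu.aemeasurable
    (not_ae_eq_zero_of_integral_eq_one (hap.integral_avgDens hi)) hκ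

/-- **Proposition 2.6(a).** If `𝓛_T` is asymptotically periodic with data
`s, r, g, Λ` and `g_i = (1/r i) ∑_j g_{i,j}`, then for each `i` the probability
measure `μ_i = g_i·dm` is `T`-invariant and `T` is ergodic with respect to it. -/
theorem stmt_8 {X : Type*} [MeasurableSpace X] (m : Measure X) [IsProbabilityMeasure m]
    (T : X → X) (hT : Measurable T)
    (hns : ∀ A : Set X, MeasurableSet A → m A = 0 → m (T ⁻¹' A) = 0)
    (L : (X → ℝ) → X → ℝ) (hL : IsPF m T L)
    (s : ℕ) (r : ℕ → ℕ) (g : ℕ → ℕ → X → ℝ) (Λ : ℕ → ℕ → (X →₁[m] ℝ) →L[ℝ] ℝ)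
    (hap : AsympPeriodic m L s r g Λ) :
    ∀ i ∈ Finset.Icc 1 s,
      IsProbabilityMeasure
          (m.withDensity fun x => ENNReal.ofReal (avgDens (r i) (g i) x)) ∧
        Ergodic T (m.withDensity fun x => ENNReal.ofReal (avgDens (r i) (g i) x)) :=
  stmt_8_general m T hT L hL s r g Λ hap
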